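/- Let R be a Noetherian local ring with maximal ideal m and I ⊆ R its nilradical. If the pair (m, Spec R) is seminormal (every finite modification centered at the closed point that is a universal homeomorphism preserving residue fields is an isomorphism), then depth_m I ≥ 2 whenever I ≠ 0 is not supported at m; in particular, every associated prime W of I satisfies codim_W(V(m) ∩ W) ≥ 2. -/

import Mathlib

/-!
Every element of `R` killed by a power of `m` is nilpotent, since otherwise a power of `m`, and
with it `m ^ n * I`, would vanish. So for the `m`-power torsion `J` (killed by a single power of
`m`, by Noetherianity) seminormality applies to `R → R ⧸ J`, whence `J = 0`, and prime avoidance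
gives an `R`-regular `r ∈ m`.
If `x ∈ I` and `m x ⊆ r I`, then `t = x / r ∈ R[1/r]` is nilpotent with `m t ⊆ R`, and
seminormality applies to `R → R[t]`, so `t ∈ R` and `x ∈ r I`. Hence `m ∉ Ass (I / r I)`,
which gives `s ∈ m` regular on `I / r I`. Finally, if `p ∈ Ass I` had no prime strictly
between `p` and `m`, a power of `s` would lie in `p + (r)`; the `p`-torsion `N` of `I` would
then satisfy `N = r N`, so `N = 0` by Nakayama, which is absurd.
-/

open IsLocalRing

section AssociatedPrimes

variable {R M : Type*} [CommRing R] [AddCommGroup M] [Module R M]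

theorem notMem_associatedPrimes_of_forall_smul_eq_zero [IsNoetherianRing R] {p : Ideal R}
    (h : ∀ x : M, (∀ y ∈ p, y • x = 0) → x = 0) : p ∉ associatedPrimes R M := by
  intro hp
  obtain ⟨hprime, x, rfl⟩ := isAssociatedPrime_iff.mp hp
  obtain rfl : x = 0 := h x fun y hy ↦ by simpa using Submodule.mem_colon_singleton.mp hy
  exact hprime.ne_top (by ext; simp [Submodule.mem_colon_singleton])

theorem exists_isSMulRegular_of_notMem_associatedPrimes [IsNoetherianRing R] [Module.Finite R M]
    {P : Ideal R} [hP : P.IsMaximal] (h : P ∉ associatedPrimes R M) :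
    ∃ r ∈ P, IsSMulRegular M r := by
  by_contra! H
  refine h ((Ideal.subset_iUnion_iff_mem_of_isMaximal_of_finite (associatedPrimes.finite R M)
    P P (fun I hI _ _ ↦ hI.isPrime) hP.ne_top hP.ne_top).mp ?_)
  rw [biUnion_associatedPrimes_eq_compl_regular]
  exact H

end AssociatedPrimes

theorem Ideal.exists_annihilator_pow_eq {R : Type*} [CommRing R] [IsNoetherianRing R]
    (I : Ideal R) : ∃ N, ∀ n ≥ N, (I ^ n).annihilator = (I ^ N).annihilator := by
  obtain ⟨N, hN⟩ := wellFoundedGT_iff_monotone_chain_condition.mp inferInstance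
    ⟨fun n ↦ (I ^ n).annihilator,
      fun _ _ h ↦ Submodule.annihilator_mono (pow_le_pow_right h)⟩
  exact ⟨N, fun n hn ↦ (hN n hn).symm⟩

theorem IsLocalRing.annihilator_maximalIdeal_pow_le_nilradical {R : Type*} [CommRing R]
    [IsLocalRing R] {n : ℕ} (h : maximalIdeal R ^ n ≠ ⊥) :
    (maximalIdeal R ^ n).annihilator ≤ nilradical R := by
  intro x hx
  rw [Submodule.mem_annihilator] at hx
  by_cases hxm : x ∈ maximalIdeal R
  · exact ⟨n + 1, by rw [pow_succ']; exact hx _ (Ideal.pow_mem_pow hxm n)⟩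
  · refine absurd (eq_bot_iff.mpr fun y hy ↦ Ideal.mem_bot.mpr ?_) h
    exact (notMem_maximalIdeal.mp hxm).mul_right_eq_zero.mp (hx y hy)

theorem PrimeSpectrum.comap_injective_of_forall_isNilpotent_sub {R S : Type*} [CommRing R]
    [CommRing S] (φ : R →+* S) (h : ∀ s, ∃ a, IsNilpotent (s - φ a)) :
    Function.Injective (PrimeSpectrum.comap φ) := by
  intro P Q hPQ
  ext s
  obtain ⟨a, ha⟩ := h s
  have hmem (P : PrimeSpectrum S) :
      s ∈ P.asIdeal ↔ a ∈ (PrimeSpectrum.comap φ P).asIdeal := by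
    rw [← sub_add_cancel s (φ a),
      Ideal.add_mem_iff_right _ (nilradical_le_prime _ (mem_nilradical.mpr ha))]
    rfl
  rw [hmem, hmem, hPQ]

namespace Algebra

variable {R A : Type*} [CommRing R] [CommRing A] [Algebra R A] {t : A}

theorem exists_isNilpotent_sub_algebraMap_of_mem_adjoin_singleton (ht : IsNilpotent t) {v : A}
    (hv : v ∈ adjoin R {t}) : ∃ a, IsNilpotent (v - algebraMap R A a) := by
  rw [adjoin_singleton_eq_range_aeval] at hv
  obtain ⟨p, rfl⟩ := hv
  obtain ⟨q, hq⟩ := Polynomial.X_dvd_sub_C (p := p)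
  refine ⟨p.coeff 0, ?_⟩
  have := congrArg (Polynomial.aeval t) hq
  simp only [map_sub, Polynomial.aeval_C, map_mul, Polynomial.aeval_X] at this
  change IsNilpotent (Polynomial.aeval t p - _)
  rw [this]
  exact (Commute.all _ _).isNilpotent_mul_right ht

theorem algebraMap_mul_mem_image_of_mem_adjoin_singleton {I : Ideal R}
    (ht : ∀ y ∈ I, algebraMap R A y * t ∈ algebraMap R A '' I) {v : A}
    (hv : v ∈ adjoin R {t}) : ∀ y ∈ I, algebraMap R A y * v ∈ algebraMap R A '' I := by
  induction hv using adjoin_induction with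
  | mem w hw => rwa [Set.mem_singleton_iff.mp hw]
  | algebraMap b => exact fun y hy ↦ ⟨y * b, I.mul_mem_right b hy, map_mul _ _ _⟩
  | add v w _ _ hv hw =>
    intro y hy
    obtain ⟨a, ha, hav⟩ := hv y hy
    obtain ⟨b, hb, hbw⟩ := hw y hy
    exact ⟨a + b, I.add_mem ha hb, by rw [map_add, hav, hbw, mul_add]⟩
  | mul v w _ _ hv hw =>
    intro y hy
    obtain ⟨a, ha, hav⟩ := hv y hy
    obtain ⟨b, hb, hbw⟩ := hw a ha
    exact ⟨b, hb, by rw [hbw, hav, mul_assoc]⟩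

end Algebra

section Depth

open scoped Pointwise

variable {R M : Type*} [CommRing R] [AddCommGroup M] [Module R M]

theorem Ideal.mem_smul_top_iff {I : Ideal R} {r : R} {x : I} :
    x ∈ r • (⊤ : Submodule R I) ↔ (x : R) ∈ Ideal.span {r} * I := by
  rw [Submodule.mem_smul_pointwise_iff_exists, Ideal.mem_span_singleton_mul]
  constructor
  · rintro ⟨z, -, rfl⟩
    exact ⟨z, z.2, rfl⟩
  · rintro ⟨z, hz, h⟩
    exact ⟨⟨z, hz⟩, trivial, Subtype.ext h⟩

theorem Submodule.torsionBySet_le_span_singleton_smul {p : Ideal R} {r t : R}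
    (hr : IsSMulRegular M r) (ht : IsSMulRegular (QuotSMulTop r M) t)
    (htp : t ∈ p ⊔ Ideal.span {r}) :
    torsionBySet R M p ≤ Ideal.span {r} • torsionBySet R M p := by
  intro v hv
  rw [mem_torsionBySet_iff, Subtype.forall] at hv
  obtain ⟨π, hπ, _, hc, rfl⟩ := mem_sup.mp htp
  obtain ⟨c, rfl⟩ := Ideal.mem_span_singleton'.mp hc
  have hrv : v ∈ r • (⊤ : Submodule R M) := by
    refine mem_of_isSMulRegular_quotient_of_smul_mem ht ?_
    rw [add_smul, hv π hπ, zero_add, mul_comm, mul_smul]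
    exact smul_mem_pointwise_smul _ _ _ trivial
  obtain ⟨z, -, rfl⟩ := (mem_smul_pointwise_iff_exists _ _ _).mp hrv
  refine smul_mem_smul (Ideal.mem_span_singleton_self r) ?_
  rw [mem_torsionBySet_iff, Subtype.forall]
  exact fun a ha ↦ hr (show r • a • z = r • 0 by rw [smul_comm, hv a ha, smul_zero])

theorem exists_isPrime_lt_lt_maximalIdeal [IsLocalRing R] [IsNoetherianRing R]
    [Module.Finite R M] {r s : R} (hr : r ∈ maximalIdeal R) (hs : s ∈ maximalIdeal R)
    (hrM : IsSMulRegular M r) (hsM : IsSMulRegular (QuotSMulTop r M) s) {p : Ideal R}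
    (hp : p ∈ associatedPrimes R M) :
    ∃ q : Ideal R, q.IsPrime ∧ p < q ∧ q < maximalIdeal R := by
  obtain ⟨hprime, w, rfl⟩ := isAssociatedPrime_iff.mp hp
  have hw : w ≠ 0 := by
    rintro rfl
    exact hprime.ne_top (by ext; simp [Submodule.mem_colon_singleton])
  have hrp : r ∉ (⊥ : Submodule R M).colon {w} := fun h ↦
    hw (hrM (show r • w = r • 0 by simpa using Submodule.mem_colon_singleton.mp h))
  by_contra! hq
  have hrad : maximalIdeal R ≤ ((⊥ : Submodule R M).colon {w} ⊔ Ideal.span {r}).radical := by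
    rw [Ideal.radical_eq_sInf]
    refine le_sInf fun J ⟨hJ, hJprime⟩ ↦ ?_
    refine (le_maximalIdeal hJprime.ne_top).eq_or_lt.elim ge_of_eq fun hJm ↦ absurd hJm ?_
    refine hq J hJprime (lt_of_le_of_ne (le_sup_left.trans hJ) ?_)
    rintro rfl
    exact hrp (hJ (Ideal.mem_sup_right (Ideal.mem_span_singleton_self r)))
  obtain ⟨k, hk⟩ := Ideal.exists_pow_le_of_le_radical_of_fg hrad (IsNoetherian.noetherian _)
  have := Submodule.eq_bot_of_le_smul_of_le_jacobson_bot _ _ (IsNoetherian.noetherian _)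
    (Submodule.torsionBySet_le_span_singleton_smul hrM (hsM.pow k) (hk (Ideal.pow_mem_pow hs k)))
    (((Ideal.span_singleton_le_iff_mem _).mpr hr).trans (maximalIdeal_le_jacobson _))
  refine hw ((Submodule.eq_bot_iff _).mp this w ?_)
  rw [Submodule.mem_torsionBySet_iff, Subtype.forall]
  exact fun a ha ↦ Submodule.mem_colon_singleton.mp ha

theorem two_le_ringKrullDim_quotient {R : Type*} [CommRing R] {p q q' : Ideal R} [p.IsPrime]
    [q.IsPrime] [q'.IsPrime] (hpq : p < q) (hqq' : q < q') :
    ((2 : ℕ) : WithBot ℕ∞) ≤ ringKrullDim (R ⧸ p) := by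
  rw [ringKrullDim_quotient]
  let x : PrimeSpectrum.zeroLocus (R := R) p :=
    ⟨⟨p, inferInstance⟩, (PrimeSpectrum.mem_zeroLocus _ _).mpr subset_rfl⟩
  let y : PrimeSpectrum.zeroLocus (R := R) p :=
    ⟨⟨q, inferInstance⟩, SetLike.coe_subset_coe.mpr hpq.le⟩
  let z : PrimeSpectrum.zeroLocus (R := R) p :=
    ⟨⟨q', inferInstance⟩, SetLike.coe_subset_coe.mpr (hpq.trans hqq').le⟩
  exact Order.LTSeries.length_le_krullDim (((RelSeries.singleton _ x).snoc y
    (show x < y from hpq)).snoc z (by exact (show y < z from hqq')))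

end Depth

def IsSeminormalAtClosedPoint (R : Type) [CommRing R] [IsLocalRing R] : Prop :=
  ∀ (S : Type) (_ : CommRing S) (φ : R →+* S),
    (letI := φ.toAlgebra; Module.Finite R S) →
    (∃ n : ℕ,
      (∀ x ∈ RingHom.ker φ, ∀ y ∈ (maximalIdeal R) ^ n, y * x = 0) ∧
      (∀ s : S, ∀ y ∈ (maximalIdeal R) ^ n, φ y * s ∈ φ.range)) →
    (letI := φ.toAlgebra; maximalIdeal R ∉ associatedPrimes R S) →
    Function.Bijective (PrimeSpectrum.comap φ) →
    (∀ q : PrimeSpectrum S, ∀ s : S, ∃ r : R, s - φ r ∈ q.asIdeal) →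
    Function.Bijective φ

namespace IsSeminormalAtClosedPoint

open scoped nonZeroDivisors

variable {R : Type} [CommRing R] [IsLocalRing R] [IsNoetherianRing R]

theorem maximalIdeal_notMem_associatedPrimes (hsn : IsSeminormalAtClosedPoint R)
    (hdim : ∀ n, maximalIdeal R ^ n ≠ ⊥) : maximalIdeal R ∉ associatedPrimes R R := by
  obtain ⟨N, hN⟩ := (maximalIdeal R).exists_annihilator_pow_eq
  -- the `m`-power torsion of `R`
  set J := (maximalIdeal R ^ N).annihilator
  have hJ (a : R) (ha : ∀ y ∈ maximalIdeal R, y * a ∈ J) : a ∈ J := by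
    rw [← hN (N + 1) N.le_succ, Submodule.mem_annihilator, pow_succ]
    intro z hz
    refine Submodule.mul_induction_on hz (fun u hu v hv ↦ ?_) fun z z' h h' ↦ ?_
    · linear_combination Submodule.mem_annihilator.mp (ha v hv) u hu
    · rw [smul_add, h, h', add_zero]
  have hinj : Function.Injective (Ideal.Quotient.mk J) := by
    refine (hsn _ _ _ (RingHom.Finite.of_surjective _ Ideal.Quotient.mk_surjective)
      ⟨N, fun x hx y hy ↦ ?_, fun _ _ _ ↦ Ideal.Quotient.mk_surjective _⟩ ?_
      (PrimeSpectrum.comap_quotientMk_bijective_of_le_nilradical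
        (annihilator_maximalIdeal_pow_le_nilradical (hdim N))) fun _ s ↦ ?_).1
    · rw [Ideal.mk_ker] at hx
      rw [mul_comm, ← smul_eq_mul]
      exact Submodule.mem_annihilator.mp hx y hy
    · refine notMem_associatedPrimes_of_forall_smul_eq_zero fun s hs ↦ ?_
      obtain ⟨a, rfl⟩ := Ideal.Quotient.mk_surjective s
      exact Ideal.Quotient.eq_zero_iff_mem.mpr
        (hJ a fun y hy ↦ Ideal.Quotient.eq_zero_iff_mem.mp (hs y hy))
    · obtain ⟨a, rfl⟩ := Ideal.Quotient.mk_surjective s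
      exact ⟨a, by simp⟩
  refine notMem_associatedPrimes_of_forall_smul_eq_zero fun x hx ↦ hinj ?_
  rw [map_zero, Ideal.Quotient.eq_zero_iff_mem]
  exact hJ x fun y hy ↦ by rw [← smul_eq_mul, hx y hy]; exact J.zero_mem

theorem bijective_of_injective (hsn : IsSeminormalAtClosedPoint R) {S : Type} [CommRing S]
    (φ : R →+* S) (hfin : φ.Finite) (hinj : Function.Injective φ)
    (hrange : ∀ s, ∀ y ∈ maximalIdeal R, φ y * s ∈ φ.range)
    (hdepth : ∀ s, (∀ y ∈ maximalIdeal R, φ y * s = 0) → s = 0)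
    (hnil : ∀ s, ∃ a, IsNilpotent (s - φ a)) : Function.Bijective φ := by
  refine hsn S _ φ hfin ⟨1, fun x hx y _ ↦ ?_, fun s y hy ↦ hrange s y (by simpa using hy)⟩
    (by let _ := φ.toAlgebra; exact notMem_associatedPrimes_of_forall_smul_eq_zero hdepth)
    ⟨PrimeSpectrum.comap_injective_of_forall_isNilpotent_sub φ hnil,
      hfin.to_isIntegral.comap_surjective hinj⟩
    fun q s ↦ ?_
  · rw [(RingHom.injective_iff_ker_eq_bot φ).mp hinj, Ideal.mem_bot] at hx
    rw [hx, mul_zero]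
  · obtain ⟨a, ha⟩ := hnil s
    exact ⟨a, nilradical_le_prime _ (mem_nilradical.mpr ha)⟩

theorem mem_range_of_isNilpotent (hsn : IsSeminormalAtClosedPoint R) {A : Type} [CommRing A]
    [Algebra R A] (hinj : Function.Injective (algebraMap R A))
    (hdepth : ∀ a : A, (∀ y ∈ maximalIdeal R, algebraMap R A y * a = 0) → a = 0) {t : A}
    (ht : IsNilpotent t)
    (htm : ∀ y ∈ maximalIdeal R, algebraMap R A y * t ∈ algebraMap R A '' maximalIdeal R) :
    t ∈ (algebraMap R A).range := by
  let S := Algebra.adjoin R {t}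
  obtain ⟨k, hk⟩ := ht
  have : Module.Finite R S :=
    Algebra.finite_adjoin_simple_of_isIntegral ⟨_, Polynomial.monic_X_pow k, by simp [hk]⟩
  have hrange (s : S) (y : R) (hy : y ∈ maximalIdeal R) :
      algebraMap R S y * s ∈ (algebraMap R S).range := by
    obtain ⟨b, -, hb⟩ := Algebra.algebraMap_mul_mem_image_of_mem_adjoin_singleton htm s.2 y hy
    exact ⟨b, Subtype.ext hb⟩
  have hnil (s : S) : ∃ a, IsNilpotent (s - algebraMap R S a) := by
    obtain ⟨a, ha⟩ :=
      Algebra.exists_isNilpotent_sub_algebraMap_of_mem_adjoin_singleton ⟨k, hk⟩ s.2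
    exact ⟨a, (IsNilpotent.map_iff (f := S.val) Subtype.val_injective).mp ha⟩
  obtain ⟨a, ha⟩ := (hsn.bijective_of_injective (algebraMap R S)
    (RingHom.finite_algebraMap.mpr this) (fun a b h ↦ hinj (congrArg Subtype.val h)) hrange
    (fun s hs ↦ Subtype.ext (hdepth s fun y hy ↦ congrArg Subtype.val (hs y hy))) hnil).2
    ⟨t, Algebra.self_mem_adjoin_singleton R t⟩
  exact ⟨a, congrArg Subtype.val ha⟩

theorem mem_span_singleton_mul_nilradical (hsn : IsSeminormalAtClosedPoint R) {r : R}
    (hr : r ∈ maximalIdeal R) (hreg : r ∈ R⁰) {x : R} (hx : x ∈ nilradical R)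
    (hmx : ∀ y ∈ maximalIdeal R, y * x ∈ Ideal.span {r} * nilradical R) :
    x ∈ Ideal.span {r} * nilradical R := by
  let A := Localization.Away r
  have hinj : Function.Injective (algebraMap R A) :=
    IsLocalization.injective A (Submonoid.powers_le.mpr hreg)
  have hu : IsUnit (algebraMap R A r) := IsLocalization.Away.algebraMap_isUnit r
  let t := IsLocalization.mk' A x (⟨r, Submonoid.mem_powers r⟩ : Submonoid.powers r)
  have hrt : algebraMap R A r * t = algebraMap R A x := IsLocalization.mk'_spec' A x _
  have ht : IsNilpotent t := by
    change IsNilpotent (IsLocalization.mk' A x _)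
    rw [IsLocalization.mk'_eq_mul_mk'_one]
    exact (Commute.all _ _).isNilpotent_mul_right ((mem_nilradical.mp hx).map _)
  have htm (y : R) (hy : y ∈ maximalIdeal R) :
      algebraMap R A y * t ∈ algebraMap R A '' maximalIdeal R := by
    obtain ⟨i, hi, hri⟩ := Ideal.mem_span_singleton_mul.mp (hmx y hy)
    refine ⟨i, nilradical_le_prime _ hi, hu.mul_left_cancel ?_⟩
    rw [← map_mul, hri, map_mul, ← hrt]
    ring
  obtain ⟨a, ha⟩ := hsn.mem_range_of_isNilpotent hinj
    (fun b hb ↦ hu.mul_right_eq_zero.mp (hb r hr)) ht htm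
  refine Ideal.mem_span_singleton_mul.mpr ⟨a, mem_nilradical.mpr ?_, hinj ?_⟩
  · exact (IsNilpotent.map_iff hinj).mp (ha ▸ ht)
  · rw [map_mul, ha, hrt]

theorem maximalIdeal_notMem_associatedPrimes_quotSMulTop (hsn : IsSeminormalAtClosedPoint R)
    {r : R} (hr : r ∈ maximalIdeal R) (hreg : r ∈ R⁰) :
    maximalIdeal R ∉ associatedPrimes R (QuotSMulTop r (nilradical R)) := by
  refine notMem_associatedPrimes_of_forall_smul_eq_zero fun v hv ↦ ?_
  induction v using Submodule.Quotient.induction_on with | H x => ?_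
  simp only [← Submodule.Quotient.mk_smul, Submodule.Quotient.mk_eq_zero,
    Ideal.mem_smul_top_iff] at hv ⊢
  exact hsn.mem_span_singleton_mul_nilradical hr hreg x.2 hv

end IsSeminormalAtClosedPoint

theorem stmt16_general (R : Type) [CommRing R] [IsLocalRing R] [IsNoetherianRing R]
    (hsn : ∀ (S : Type) (_ : CommRing S) (φ : R →+* S),
      (letI := φ.toAlgebra; Module.Finite R S) →
      (∃ n : ℕ,
        (∀ x ∈ RingHom.ker φ, ∀ y ∈ (IsLocalRing.maximalIdeal R) ^ n, y * x = 0) ∧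
        (∀ s : S, ∀ y ∈ (IsLocalRing.maximalIdeal R) ^ n, φ y * s ∈ φ.range)) →
      (letI := φ.toAlgebra; IsLocalRing.maximalIdeal R ∉ associatedPrimes R S) →
      Function.Bijective (PrimeSpectrum.comap φ) →
      (∀ q : PrimeSpectrum S, ∀ s : S, ∃ r : R, s - φ r ∈ q.asIdeal) →
      Function.Bijective φ)
    (hsupp : ¬ ∃ n : ℕ, (IsLocalRing.maximalIdeal R) ^ n * nilradical R = ⊥) :
    (∃ r ∈ IsLocalRing.maximalIdeal R,
      (∀ x ∈ nilradical R, r * x = 0 → x = 0) ∧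
      ∃ s ∈ IsLocalRing.maximalIdeal R,
        ∀ x ∈ nilradical R,
          s * x ∈ Ideal.span {r} * nilradical R → x ∈ Ideal.span {r} * nilradical R) ∧
    (∀ p ∈ associatedPrimes R (↥(nilradical R)),
      ((2 : ℕ) : WithBot (WithTop ℕ)) ≤ ringKrullDim (R ⧸ p)) := by
  have hsn : IsSeminormalAtClosedPoint R := hsn
  have hdim (n : ℕ) : maximalIdeal R ^ n ≠ ⊥ := fun h ↦
    hsupp ⟨n, by rw [h, Submodule.bot_mul]⟩
  obtain ⟨r, hr, hrR⟩ := exists_isSMulRegular_of_notMem_associatedPrimes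
    (hsn.maximalIdeal_notMem_associatedPrimes hdim)
  have hr0 : r ∈ nonZeroDivisors R :=
    mem_nonZeroDivisors_iff_left.mpr (isSMulRegular_iff_right_eq_zero_of_smul.mp hrR)
  obtain ⟨s, hs, hsI⟩ := exists_isSMulRegular_of_notMem_associatedPrimes
    (hsn.maximalIdeal_notMem_associatedPrimes_quotSMulTop hr hr0)
  refine ⟨⟨r, hr, fun x _ ↦ mem_nonZeroDivisors_iff_left.mp hr0 x, s, hs,
    fun x hx hsx ↦ ?_⟩, fun p hp ↦ ?_⟩
  · exact Ideal.mem_smul_top_iff.mp <| mem_of_isSMulRegular_quotient_of_smul_mem hsI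
      (x := ⟨x, hx⟩) (Ideal.mem_smul_top_iff.mpr hsx)
  · obtain ⟨q, _, hpq, hqm⟩ :=
      exists_isPrime_lt_lt_maximalIdeal hr hs (hrR.submodule _ _) hsI hp
    have := hp.isPrime
    exact two_le_ringKrullDim_quotient hpq hqm

/-- If (R,m) is Noetherian local with nilradical I ≠ 0 not supported at m,
and the pair (m, Spec R) is seminormal (every finite modification centered at the closed
point that is a universal homeomorphism preserving residue fields is an isomorphism),
then depth_m I ≥ 2; in particular every associated prime of I has quotient of Krull
dimension ≥ 2. -/
theorem stmt16 (R : Type) [CommRing R] [IsLocalRing R] [IsNoetherianRing R]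
    (hsn : ∀ (S : Type) (_ : CommRing S) (φ : R →+* S),
      (letI := φ.toAlgebra; Module.Finite R S) →
      (∃ n : ℕ,
        (∀ x ∈ RingHom.ker φ, ∀ y ∈ (IsLocalRing.maximalIdeal R) ^ n, y * x = 0) ∧
        (∀ s : S, ∀ y ∈ (IsLocalRing.maximalIdeal R) ^ n, φ y * s ∈ φ.range)) →
      (letI := φ.toAlgebra; IsLocalRing.maximalIdeal R ∉ associatedPrimes R S) →
      Function.Bijective (PrimeSpectrum.comap φ) →
      (∀ q : PrimeSpectrum S, ∀ s : S, ∃ r : R, s - φ r ∈ q.asIdeal) →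
      Function.Bijective φ)
    (hne : nilradical R ≠ ⊥)
    (hsupp : ¬ ∃ n : ℕ, (IsLocalRing.maximalIdeal R) ^ n * nilradical R = ⊥) :
    (∃ r ∈ IsLocalRing.maximalIdeal R,
      (∀ x ∈ nilradical R, r * x = 0 → x = 0) ∧
      ∃ s ∈ IsLocalRing.maximalIdeal R,
        ∀ x ∈ nilradical R,
          s * x ∈ Ideal.span {r} * nilradical R → x ∈ Ideal.span {r} * nilradical R) ∧
    (∀ p ∈ associatedPrimes R (↥(nilradical R)),
      ((2 : ℕ) : WithBot (WithTop ℕ)) ≤ ringKrullDim (R ⧸ p)) :=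
  stmt16_general R hsn hsupp
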